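/- For n ≥ 3, the rank of the semigroup OCP_n of order-preserving partial contraction mappings on [n] is exactly 2n. -/

import Mathlib

/-- Partial transformations on the chain with `n` elements. -/
abbrev PT (n : ℕ) := Fin n → Option (Fin n)

/-- Left-to-right composition of partial transformations: `x(f*g) = g(f(x))`. -/
instance PT.instMul (n : ℕ) : Mul (PT n) := ⟨fun f g x => (f x).bind g⟩

instance PT.instSemigroup (n : ℕ) : Semigroup (PT n) where
  mul_assoc f g h := funext fun x => by
    show ((f x).bind g).bind h = (f x).bind (fun y => (g y).bind h)
    cases f x <;> rfl

/-- Domain of a partial transformation. -/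
def dom {n : ℕ} (f : PT n) : Set (Fin n) := {x | (f x).isSome}

/-- Image of a partial transformation. -/
def im {n : ℕ} (f : PT n) : Set (Fin n) := {y | ∃ x, f x = some y}

/-- `f` is a contraction: `|f x - f y| ≤ |x - y|` on its domain. -/
def IsContraction {n : ℕ} (f : PT n) : Prop :=
  ∀ x y a b, f x = some a → f y = some b → Nat.dist a.val b.val ≤ Nat.dist x.val y.val

/-- `f` is order-preserving on its domain. -/
def IsOP {n : ℕ} (f : PT n) : Prop :=
  ∀ x y a b, f x = some a → f y = some b → x ≤ y → a ≤ b

/-- `f` is order-reversing on its domain. -/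
def IsOR {n : ℕ} (f : PT n) : Prop :=
  ∀ x y a b, f x = some a → f y = some b → x ≤ y → b ≤ a


/-!
Every total map in `OCP_n` is, read on `ℕ`, a function `F` with steps in `{0, 1}`. Peeling off
one unit of `F 0` at a time (a shift) and one plateau at a time (a collapse of two adjacent
points) writes it as a product of the shift `x ↦ min (x + 1) (n - 1)`, the collapses at
`0, …, n - 3` and the identity; the collapse at `n - 2` is the shift followed by the collapse at
`0`. A partial map is the partial identity on its domain followed by a total extension, and
partial identities are products of the `n` maps `id` with one point removed. This gives `2n`
generators.

Conversely, the `2n` sets "injective with domain `[n] ∖ {i}`" and "total with exactly one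
plateau, at `q`" (for `q = n - 1`: total without plateau, i.e. the identity) are pairwise
disjoint, and each is closed under taking left factors in `OCP_n`, up to the case where the left
factor is the identity. Hence every generating set meets each of them.
-/

open Function

theorem Subsemigroup.inter_nonempty_of_mem_or_mem {M : Type*} [Mul M] {A C : Set M}
    (hC : ∀ g ∈ closure A, ∀ h ∈ closure A, g * h ∈ C → g ∈ C ∨ h ∈ C)
    {c : M} (hc : c ∈ closure A) (hcC : c ∈ C) : (A ∩ C).Nonempty := by
  induction hc using Subsemigroup.closure_induction with
  | mem x hx => exact ⟨x, hx, hcC⟩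
  | mul g h hg hh ihg ihh => exact (hC g hg h hh hcC).elim ihg ihh

namespace PT

variable {n : ℕ}

lemma mul_apply (f g : PT n) (x : Fin n) : (f * g) x = (f x).bind g := rfl

def OCP (n : ℕ) : Subsemigroup (PT n) where
  carrier := {f | IsOP f ∧ IsContraction f}
  mul_mem' := by
    rintro f g ⟨hfo, hfc⟩ ⟨hgo, hgc⟩
    refine ⟨fun x y a b hx hy hxy => ?_, fun x y a b hx hy => ?_⟩ <;>
      obtain ⟨u, hu, hua⟩ := Option.bind_eq_some_iff.mp hx <;>
      obtain ⟨v, hv, hvb⟩ := Option.bind_eq_some_iff.mp hy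
    · exact hgo u v a b hua hvb (hfo x y u v hu hv hxy)
    · exact (hgc u v a b hua hvb).trans (hfc x y u v hu hv)

def idOff (S : Finset (Fin n)) : PT n := fun x => if x ∈ S then none else some x

lemma idOff_eq_some {S : Finset (Fin n)} {x a : Fin n} :
    idOff S x = some a ↔ x ∉ S ∧ x = a := by
  unfold idOff
  split_ifs <;> simp [*]

lemma idOff_mem_OCP (S : Finset (Fin n)) : idOff S ∈ OCP n := by
  refine ⟨fun x y a b hx hy hxy => ?_, fun x y a b hx hy => ?_⟩ <;>
    obtain ⟨-, rfl⟩ := idOff_eq_some.mp hx <;> obtain ⟨-, rfl⟩ := idOff_eq_some.mp hy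
  · exact hxy
  · exact le_rfl

lemma idOff_insert (a : Fin n) (S : Finset (Fin n)) :
    idOff (insert a S) = idOff {a} * idOff S := by
  funext x
  by_cases hx : x = a <;> simp [idOff, mul_apply, hx]

def ofFun (n : ℕ) (F : ℕ → ℕ) : PT n :=
  fun x => if h : F x < n then some ⟨F x, h⟩ else none

lemma ofFun_apply {F : ℕ → ℕ} {x : Fin n} (h : F x < n) : ofFun n F x = some ⟨F x, h⟩ :=
  dif_pos h

lemma ofFun_eq_some {F : ℕ → ℕ} {x a : Fin n} : ofFun n F x = some a ↔ F x = a := by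
  unfold ofFun
  split_ifs with h
  · simp [Fin.ext_iff]
  · simp only [false_iff]
    omega

lemma ofFun_congr {F G : ℕ → ℕ} (h : ∀ x < n, F x = G x) : ofFun n F = ofFun n G := by
  funext x
  simp [ofFun, h x x.isLt]

lemma ofFun_mul {F G : ℕ → ℕ} (hF : ∀ x < n, F x < n) :
    ofFun n F * ofFun n G = ofFun n (G ∘ F) := by
  funext x
  rw [mul_apply, ofFun_apply (hF x x.isLt), Option.bind_some]
  rfl

structure IsUnitStep (n : ℕ) (F : ℕ → ℕ) : Prop where
  lt : ∀ x < n, F x < n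
  step : ∀ x, x + 1 < n → F x ≤ F (x + 1) ∧ F (x + 1) ≤ F x + 1

namespace IsUnitStep

variable {F : ℕ → ℕ}

lemma bounds (hF : IsUnitStep n F) {x y : ℕ} (hxy : x ≤ y) (hy : y < n) :
    F x ≤ F y ∧ F y ≤ F x + (y - x) := by
  induction y, hxy using Nat.le_induction with
  | base => simp
  | succ y hxy ih =>
    have := ih (by omega)
    have := hF.step y hy
    omega

lemma mem_OCP (hF : IsUnitStep n F) : ofFun n F ∈ OCP n := by
  refine ⟨fun x y a b hx hy hxy => ?_, fun x y a b hx hy => ?_⟩ <;>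
    rw [ofFun_eq_some] at hx hy
  · have := hF.bounds hxy y.isLt
    rw [Fin.le_def]
    omega
  · unfold Nat.dist
    rcases le_total x y with hxy | hxy
    · have := hF.bounds hxy y.isLt
      omega
    · have := hF.bounds hxy x.isLt
      omega

lemma sub_one (hF : IsUnitStep n F) : IsUnitStep n (fun x => F x - 1) where
  lt x hx := by
    have := hF.lt x hx
    omega
  step x hx := by
    have := hF.step x hx
    omega

lemma eq_add_of_le (hF : IsUnitStep n F) (h : F 0 + (n - 1) ≤ F (n - 1)) {x : ℕ}
    (hx : x < n) : F x = F 0 + x := by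
  have := hF.bounds (Nat.zero_le x) hx
  have := hF.bounds (show x ≤ n - 1 by omega) (by omega)
  omega

lemma exists_plateau (hF : IsUnitStep n F) (h : F (n - 1) < F 0 + (n - 1)) :
    ∃ z, z + 1 < n ∧ F z = F (z + 1) := by
  rcases Nat.eq_zero_or_pos n with rfl | hn
  · simp at h
  by_contra! hnp
  have hlin : ∀ x < n, F x = F 0 + x := by
    intro x hx
    induction x with
    | zero => rfl
    | succ x ih =>
      have := ih (by omega)
      have := hF.step x hx
      have := hnp x hx
      omega
  have := hlin (n - 1) (by omega)
  omega

lemma liftAbove (hF : IsUnitStep n F) (h0 : F 0 = 0) {z : ℕ} (hz : z + 1 < n)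
    (hplat : F z = F (z + 1)) : IsUnitStep n (fun x => if x ≤ z then F x else F x + 1) where
  lt x hx := by
    split_ifs with hxz
    · exact hF.lt x hx
    · have := hF.bounds (show z + 1 ≤ x by omega) hx
      have := hF.bounds (Nat.zero_le z) (by omega)
      omega
  step x hx := by
    obtain rfl | hxz := eq_or_ne x z
    · simp only [le_refl, if_true, show ¬x + 1 ≤ x by omega, if_false]
      omega
    · have := hF.step x hx
      split_ifs <;> omega

end IsUnitStep

def shift (n x : ℕ) : ℕ := min (x + 1) (n - 1)

def collapse (v x : ℕ) : ℕ := if x ≤ v then x else x - 1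

lemma ofFun_eq_mul_shift {F : ℕ → ℕ} (hF : IsUnitStep n F) (h0 : 0 < F 0) :
    ofFun n F = ofFun n (fun x => F x - 1) * ofFun n (shift n) := by
  rw [ofFun_mul hF.sub_one.lt]
  refine ofFun_congr fun x hx => ?_
  have := hF.bounds (Nat.zero_le x) hx
  have := hF.lt x hx
  simp only [comp_apply, shift]
  omega

lemma ofFun_eq_mul_collapse {F : ℕ → ℕ} (hF : IsUnitStep n F) (h0 : F 0 = 0) {z : ℕ}
    (hz : z + 1 < n) (hplat : F z = F (z + 1)) :
    ofFun n F =
      ofFun n (fun x => if x ≤ z then F x else F x + 1) * ofFun n (collapse (F z)) := by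
  rw [ofFun_mul (hF.liftAbove h0 hz hplat).lt]
  refine ofFun_congr fun x hx => ?_
  simp only [comp_apply, collapse]
  by_cases hxz : x ≤ z
  · have := hF.bounds hxz (by omega)
    simp only [hxz, if_true]
    split_ifs <;> omega
  · have := hF.bounds (show z ≤ x by omega) hx
    simp only [hxz, if_false]
    split_ifs <;> omega

lemma isUnitStep_collapse (v : ℕ) : IsUnitStep n (collapse v) where
  lt x hx := by
    unfold collapse
    split_ifs <;> omega
  step x hx := by
    unfold collapse
    split_ifs <;> omega

lemma isUnitStep_shift : IsUnitStep n (shift n) where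
  lt x hx := by
    unfold shift
    omega
  step x hx := by
    unfold shift
    omega

/-- `collapse (n - 1)` is the identity on `[n]`. -/
def genTot (n q : ℕ) : ℕ → ℕ := if q = n - 2 then shift n else collapse q

def generators (n : ℕ) : Set (PT n) :=
  Set.range (Sum.elim (fun i : Fin n => idOff {i}) fun q : Fin n => ofFun n (genTot n q))

lemma isUnitStep_genTot (q : ℕ) : IsUnitStep n (genTot n q) := by
  unfold genTot
  split_ifs
  exacts [isUnitStep_shift, isUnitStep_collapse q]

lemma generators_subset_OCP : generators n ⊆ OCP n := by
  rintro _ ⟨i | q, rfl⟩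
  exacts [idOff_mem_OCP _, (isUnitStep_genTot q).mem_OCP]

lemma ncard_generators_le : (generators n).ncard ≤ 2 * n := by
  rw [generators, ← Nat.card_coe_set_eq]
  refine (Finite.card_range_le _).trans ?_
  rw [Nat.card_sum, Nat.card_eq_fintype_card, Fintype.card_fin, two_mul]

open Subsemigroup

lemma ofFun_genTot_mem_closure (q : Fin n) : ofFun n (genTot n q) ∈ closure (generators n) :=
  subset_closure ⟨Sum.inr q, rfl⟩

lemma shift_mem_closure (hn : 2 ≤ n) : ofFun n (shift n) ∈ closure (generators n) := by
  simpa [genTot] using ofFun_genTot_mem_closure (n := n) ⟨n - 2, by omega⟩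

lemma collapse_mem_closure (hn : 3 ≤ n) {v : ℕ} (hv : v < n) :
    ofFun n (collapse v) ∈ closure (generators n) := by
  by_cases hv2 : v = n - 2
  · subst hv2
    have hdecomp : ofFun n (collapse (n - 2)) = ofFun n (shift n) * ofFun n (collapse 0) := by
      rw [ofFun_mul isUnitStep_shift.lt]
      refine ofFun_congr fun x hx => ?_
      simp only [comp_apply, shift, collapse, Nat.min_def]
      split_ifs <;> omega
    rw [hdecomp]
    refine mul_mem (shift_mem_closure (by omega)) ?_
    simpa [genTot, show 0 ≠ n - 2 by omega] using
      ofFun_genTot_mem_closure (n := n) ⟨0, by omega⟩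
  · simpa [genTot, hv2] using ofFun_genTot_mem_closure (n := n) ⟨v, hv⟩

lemma ofFun_mem_closure_of_zero (hn : 3 ≤ n) {F : ℕ → ℕ} (hF : IsUnitStep n F)
    (h0 : F 0 = 0) : ofFun n F ∈ closure (generators n) := by
  -- `n - 1 - F (n - 1)` is the number of plateaus of `F`.
  obtain ⟨d, hd⟩ : ∃ d, n - 1 - F (n - 1) = d := ⟨_, rfl⟩
  induction d generalizing F with
  | zero =>
    have hid : ofFun n F = ofFun n (collapse (n - 1)) := ofFun_congr fun x hx => by
      rw [hF.eq_add_of_le (by omega) hx, h0, collapse, if_pos (by omega)]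
      omega
    rw [hid]
    exact collapse_mem_closure hn (by omega)
  | succ d ih =>
    obtain ⟨z, hz, hplat⟩ := hF.exists_plateau (by omega)
    rw [ofFun_eq_mul_collapse hF h0 hz hplat]
    refine mul_mem (ih (hF.liftAbove h0 hz hplat) (by simp [h0]) ?_)
      (collapse_mem_closure hn (hF.lt z (by omega)))
    simp only [show ¬n - 1 ≤ z by omega, if_false]
    omega

lemma ofFun_mem_closure (hn : 3 ≤ n) {F : ℕ → ℕ} (hF : IsUnitStep n F) :
    ofFun n F ∈ closure (generators n) := by
  obtain ⟨c, hc⟩ : ∃ c, F 0 = c := ⟨_, rfl⟩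
  induction c generalizing F with
  | zero => exact ofFun_mem_closure_of_zero hn hF hc
  | succ c ih =>
    rw [ofFun_eq_mul_shift hF (by omega)]
    exact mul_mem (ih hF.sub_one (by simp [hc])) (shift_mem_closure (by omega))

lemma idOff_mem_closure (hn : 3 ≤ n) (S : Finset (Fin n)) :
    idOff S ∈ closure (generators n) := by
  induction S using Finset.induction_on with
  | empty =>
    have hid : idOff (∅ : Finset (Fin n)) = ofFun n id := by
      funext x
      simp [idOff, ofFun]
    rw [hid]
    exact ofFun_mem_closure hn ⟨fun x hx => hx, fun x _ => by simp⟩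
  | insert a S _ ih =>
    rw [idOff_insert]
    exact mul_mem (subset_closure ⟨Sum.inl a, rfl⟩) ih

/-- Each point `d` of the domain forces `F x ≥ f d - (d - x)` on every monotone contraction `F`
extending `f`; `extend f` is the least such function. -/
def extend (f : PT n) (x : ℕ) : ℕ :=
  Finset.univ.sup fun d : Fin n => (f d).elim 0 fun a => a - (d - x)

lemma le_extend {f : PT n} {d a : Fin n} (hd : f d = some a) (x : ℕ) :
    a - (d - x) ≤ extend f x := by
  unfold extend
  simpa [hd] using Finset.le_sup (f := fun d : Fin n => (f d).elim 0 fun a => a - (d - x))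
    (Finset.mem_univ d)

lemma isUnitStep_extend (f : PT n) : IsUnitStep n (extend f) where
  lt x hx := by
    refine (Finset.sup_lt_iff (Nat.zero_lt_of_lt hx)).mpr fun d _ => ?_
    rcases f d with _ | a
    · simpa using Nat.zero_lt_of_lt hx
    · have := a.isLt
      simp only [Option.elim]
      omega
  step x hx := by
    constructor
    · refine Finset.sup_mono_fun fun d _ => ?_
      rcases f d with _ | a <;> simp only [Option.elim] <;> omega
    · refine Finset.sup_le fun d _ => ?_
      rcases hfd : f d with _ | a
      · simp
      · have := le_extend hfd x
        simp only [Option.elim]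
        omega

lemma extend_eq {f : PT n} (hf : f ∈ OCP n) {x a : Fin n} (hx : f x = some a) :
    extend f x = a := by
  refine le_antisymm (Finset.sup_le fun d _ => ?_) ?_
  · rcases hfd : f d with _ | b
    · simp
    · simp only [Option.elim]
      rcases le_total d x with hdx | hxd
      · have := hf.1 d x b a hfd hx hdx
        rw [Fin.le_def] at this
        omega
      · have := hf.2 d x b a hfd hx
        unfold Nat.dist at this
        have := hf.1 x d a b hx hfd hxd
        rw [Fin.le_def] at this
        omega
  · simpa using le_extend hx x

lemma eq_idOff_mul_ofFun_extend {f : PT n} (hf : f ∈ OCP n) :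
    f = idOff (Finset.univ.filter fun x => f x = none) * ofFun n (extend f) := by
  funext x
  rw [mul_apply]
  rcases hfx : f x with _ | a
  · simp [idOff, hfx]
  · simp [idOff, hfx, ofFun_apply ((isUnitStep_extend f).lt x x.isLt), extend_eq hf hfx]

theorem closure_generators (hn : 3 ≤ n) : closure (generators n) = OCP n := by
  refine le_antisymm (closure_le.mpr generators_subset_OCP) fun f hf => ?_
  rw [eq_idOff_mul_ofFun_extend hf]
  exact mul_mem (idOff_mem_closure hn _) (ofFun_mem_closure hn (isUnitStep_extend f))

lemma exists_monotone_of_ne_none {g : PT n} (hg : IsOP g) (htot : ∀ x, g x ≠ none) :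
    ∃ G : Fin n → Fin n, Monotone G ∧ ∀ x, g x = some (G x) := by
  choose G hG using fun x => Option.ne_none_iff_exists'.mp (htot x)
  exact ⟨G, fun x y hxy => hg x y _ _ (hG x) (hG y) hxy, hG⟩

lemma mul_eq_right_of_injective {g : PT n} (hg : IsOP g) (htot : ∀ x, g x ≠ none)
    (hinj : Injective g) (h : PT n) : g * h = h := by
  obtain ⟨G, hGm, hG⟩ := exists_monotone_of_ne_none hg htot
  have hGs : StrictMono G :=
    hGm.strictMono_of_injective fun x y hxy => hinj (by rw [hG, hG, hxy])
  funext x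
  rw [mul_apply, hG, hGs.eq_id]
  rfl

def Plateau (f : PT n) (x : ℕ) : Prop := ∃ h : x + 1 < n, f ⟨x, by omega⟩ = f ⟨x + 1, h⟩

lemma Plateau.mul_right {f : PT n} {x : ℕ} (hf : Plateau f x) (h : PT n) : Plateau (f * h) x :=
  ⟨hf.1, by rw [mul_apply, mul_apply, hf.2]⟩

lemma injective_of_forall_not_plateau {g : PT n} (hg : IsOP g) (htot : ∀ x, g x ≠ none)
    (hnp : ∀ x, ¬Plateau g x) : Injective g := by
  obtain ⟨G, hGm, hG⟩ := exists_monotone_of_ne_none hg htot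
  have hGs : StrictMono G := fun x y hxy => (hGm hxy.le).lt_of_ne fun hGxy => by
    have hx1 : x.val + 1 < n := by omega
    have hsucc : G x = G ⟨x + 1, hx1⟩ :=
      le_antisymm (hGm (show x ≤ ⟨x + 1, hx1⟩ from Nat.le_succ _))
        (hGxy ▸ hGm (show ⟨x + 1, hx1⟩ ≤ y from hxy))
    exact hnp x ⟨hx1, by rw [hG, hG, ← hsucc]⟩
  intro x y hxy
  exact hGs.injective (Option.some_inj.mp (by rw [← hG, ← hG, hxy]))

/-- Injectivity of `f` as a map into `Option (Fin n)` makes `i` the only point outside the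
domain. -/
def holeClass (i : Fin n) : Set (PT n) := {f | f i = none ∧ Injective f}

def plateauClass (n q : ℕ) : Set (PT n) :=
  {f | (∀ x, f x ≠ none) ∧ ∀ x, Plateau f x ↔ x = q ∧ x + 1 < n}

lemma mem_holeClass_or_mem {i : Fin n} {g h : PT n} (hg : IsOP g) (hf : g * h ∈ holeClass i) :
    g ∈ holeClass i ∨ h ∈ holeClass i := by
  obtain ⟨hfi, hfinj⟩ := hf
  have hginj : Injective g := Injective.of_comp (f := fun o : Option (Fin n) => o.bind h) hfinj
  by_cases hgi : g i = none
  · exact Or.inl ⟨hgi, hginj⟩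
  · have htot : ∀ x, g x ≠ none := fun x hx => hgi <| by
      rwa [← hfinj (show (g * h) x = (g * h) i by rw [hfi, mul_apply, hx, Option.bind_none])]
    rw [← mul_eq_right_of_injective hg htot hginj h]
    exact Or.inr ⟨hfi, hfinj⟩

lemma mem_plateauClass_or_mem {q : ℕ} {g h : PT n} (hg : IsOP g)
    (hf : g * h ∈ plateauClass n q) : g ∈ plateauClass n q ∨ h ∈ plateauClass n q := by
  obtain ⟨hftot, hfpl⟩ := hf
  have htot : ∀ x, g x ≠ none := fun x hx => hftot x (by rw [mul_apply, hx, Option.bind_none])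
  by_cases hpl : ∃ z, Plateau g z
  · obtain ⟨z, hz⟩ := hpl
    obtain ⟨rfl, -⟩ := (hfpl z).mp (hz.mul_right h)
    refine Or.inl ⟨htot, fun x => ⟨fun hx => (hfpl x).mp (hx.mul_right h), ?_⟩⟩
    rintro ⟨rfl, -⟩
    exact hz
  · have hginj := injective_of_forall_not_plateau hg htot (not_exists.mp hpl)
    rw [← mul_eq_right_of_injective hg htot hginj h]
    exact Or.inr ⟨hftot, hfpl⟩

def rankClass (n : ℕ) : Fin n ⊕ Fin n → Set (PT n) :=
  Sum.elim holeClass fun q => plateauClass n q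

lemma mem_rankClass_or_mem {j : Fin n ⊕ Fin n} {g h : PT n} (hg : IsOP g)
    (hf : g * h ∈ rankClass n j) : g ∈ rankClass n j ∨ h ∈ rankClass n j := by
  rcases j with i | q
  exacts [mem_holeClass_or_mem hg hf, mem_plateauClass_or_mem hg hf]

lemma eq_of_mem_rankClass {f : PT n} :
    ∀ {j j' : Fin n ⊕ Fin n}, f ∈ rankClass n j → f ∈ rankClass n j' → j = j'
  | .inl _, .inl _, ⟨hi, hinj⟩, ⟨hi', _⟩ => congrArg _ (hinj (hi.trans hi'.symm))
  | .inl i, .inr _, ⟨hi, _⟩, ⟨htot, _⟩ => (htot i hi).elim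
  | .inr _, .inl i, ⟨htot, _⟩, ⟨hi, _⟩ => (htot i hi).elim
  | .inr q, .inr q', ⟨_, hq⟩, ⟨_, hq'⟩ => by
    have hpl := (hq (min q q')).symm.trans (hq' (min q q'))
    have := q.isLt
    have := q'.isLt
    exact congrArg Sum.inr (Fin.ext (by omega))

lemma exists_mem_OCP_mem_rankClass (j : Fin n ⊕ Fin n) :
    ∃ f ∈ OCP n, f ∈ rankClass n j := by
  rcases j with i | q
  · refine ⟨idOff {i}, idOff_mem_OCP _, by simp [idOff], fun x y hxy => ?_⟩
    by_cases hx : x = i <;> by_cases hy : y = i <;> simp_all [idOff]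
  · refine ⟨ofFun n (collapse q), (isUnitStep_collapse q).mem_OCP,
      fun x => by simp [ofFun, (isUnitStep_collapse q).lt x x.isLt], fun x => ⟨?_, ?_⟩⟩
    · rintro ⟨hx, hplat⟩
      rw [ofFun_apply ((isUnitStep_collapse q).lt _ (by omega)),
        ofFun_apply ((isUnitStep_collapse q).lt _ hx)] at hplat
      simp only [Option.some.injEq, Fin.mk.injEq, collapse] at hplat
      split_ifs at hplat <;> omega
    · rintro ⟨rfl, hx⟩
      refine ⟨hx, ?_⟩
      rw [ofFun_apply ((isUnitStep_collapse q).lt _ (by omega)),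
        ofFun_apply ((isUnitStep_collapse q).lt _ hx)]
      simp [collapse]

theorem two_mul_le_ncard_of_closure_eq {A : Set (PT n)} (hA : closure A = OCP n) :
    2 * n ≤ A.ncard := by
  have hmeet : ∀ j, (A ∩ rankClass n j).Nonempty := fun j => by
    obtain ⟨f, hfO, hfC⟩ := exists_mem_OCP_mem_rankClass j
    refine inter_nonempty_of_mem_or_mem (fun g hg h _ => ?_) (hA ▸ hfO) hfC
    exact mem_rankClass_or_mem (hA ▸ hg).1
  choose w hwA hwC using hmeet
  have hw : Injective w := fun j j' h => eq_of_mem_rankClass (hwC j) (h ▸ hwC j')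
  calc 2 * n = Nat.card (Fin n ⊕ Fin n) := by
        rw [Nat.card_sum, Nat.card_eq_fintype_card, Fintype.card_fin, two_mul]
    _ ≤ Nat.card A := Nat.card_le_card_of_injective (fun j => ⟨w j, hwA j⟩) fun j j' h =>
        hw (congrArg Subtype.val h)
    _ = A.ncard := Nat.card_coe_set_eq A

end PT

/-- for `n ≥ 3`, the rank of `OCP_n` is exactly `2n`: `2n` is the least
cardinality of a generating set. -/
theorem stmt_13 {n : ℕ} (hn : 3 ≤ n) :
    IsLeast {k : ℕ | ∃ A : Set (PT n), A.ncard = k ∧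
      (Subsemigroup.closure A : Set (PT n)) = {f : PT n | IsOP f ∧ IsContraction f}}
      (2 * n) := by
  have hgen := PT.closure_generators hn
  refine ⟨⟨PT.generators n, ?_, congrArg SetLike.coe hgen⟩, ?_⟩
  · exact le_antisymm PT.ncard_generators_le (PT.two_mul_le_ncard_of_closure_eq hgen)
  · rintro k ⟨A, rfl, hA⟩
    exact PT.two_mul_le_ncard_of_closure_eq (SetLike.coe_injective hA)
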